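/- For all real γ and π, the identity (γ−1)²(1−3π) − (γ−1−π)² = π·((γ−1)(5−3γ) − π) holds. Consequently: (a) if γ > 1 and 0 < π < γ−1, then ((γ−1)/(γ−1−π))²·(1−3π) ≥ 1 if and only if π ≤ (γ−1)(5−3γ); (b) for γ > 1, there exists π ∈ (0, γ−1) satisfying this inequality if and only if 1 < γ < 5/3; (c) (γ−1)(5−3γ) ≤ 1/3 for every real γ, with equality if and only if γ = 4/3. -/
import Mathlib


noncomputable section

lemma taub_a (γ π : ℝ) (hγ : 1 < γ) (hπ : 0 < π) (hlt : π < γ - 1) :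
    ((γ - 1) / (γ - 1 - π)) ^ 2 * (1 - 3 * π) ≥ 1 ↔ π ≤ (γ - 1) * (5 - 3 * γ) := by
  have hd : 0 < γ - 1 - π := by linarith
  rw [div_pow, div_mul_eq_mul_div, ge_iff_le, le_div_iff₀ (by positivity)]
  constructor
  · intro h; nlinarith
  · intro h; nlinarith

/-- Taub's inequality for a classical ideal gas. -/
theorem classical_ideal_gas_taub_inequality :
    (∀ γ π : ℝ,
      (γ - 1) ^ 2 * (1 - 3 * π) - (γ - 1 - π) ^ 2 = π * ((γ - 1) * (5 - 3 * γ) - π))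
    ∧ (∀ γ π : ℝ, 1 < γ → 0 < π → π < γ - 1 →
        (((γ - 1) / (γ - 1 - π)) ^ 2 * (1 - 3 * π) ≥ 1 ↔ π ≤ (γ - 1) * (5 - 3 * γ)))
    ∧ (∀ γ : ℝ, 1 < γ →
        ((∃ π : ℝ, 0 < π ∧ π < γ - 1 ∧ ((γ - 1) / (γ - 1 - π)) ^ 2 * (1 - 3 * π) ≥ 1)
          ↔ (1 < γ ∧ γ < 5 / 3)))
    ∧ (∀ γ : ℝ, (γ - 1) * (5 - 3 * γ) ≤ 1 / 3
        ∧ ((γ - 1) * (5 - 3 * γ) = 1 / 3 ↔ γ = 4 / 3)) := by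
  refine ⟨fun γ π => by ring, fun γ π => taub_a γ π, ?_, ?_⟩
  · intro γ hγ
    constructor
    · rintro ⟨π, hπ, hlt, h⟩
      rw [taub_a γ π hγ hπ hlt] at h
      refine ⟨hγ, ?_⟩
      nlinarith
    · rintro ⟨h1, h2⟩
      have hQ : 0 < (γ - 1) * (5 - 3 * γ) := by nlinarith
      have hmin : 0 < min ((γ - 1) * (5 - 3 * γ)) (γ - 1) :=
        lt_min hQ (by linarith)
      refine ⟨min ((γ - 1) * (5 - 3 * γ)) (γ - 1) / 2, by linarith, ?_, ?_⟩
      · have := min_le_right ((γ - 1) * (5 - 3 * γ)) (γ - 1); linarith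
      · have hπ : 0 < min ((γ - 1) * (5 - 3 * γ)) (γ - 1) / 2 := by linarith
        have hlt : min ((γ - 1) * (5 - 3 * γ)) (γ - 1) / 2 < γ - 1 := by
          have := min_le_right ((γ - 1) * (5 - 3 * γ)) (γ - 1); linarith
        rw [taub_a γ _ hγ hπ hlt]
        have := min_le_left ((γ - 1) * (5 - 3 * γ)) (γ - 1); linarith
  · intro γ
    constructor
    · nlinarith [sq_nonneg (γ - 4 / 3)]
    · constructor
      · intro h; nlinarith [sq_nonneg (γ - 4 / 3)]
      · intro h; subst h; norm_num
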